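/- For every k ≥ 2, there exists a (k+1)-regular graph of order 2k + 2 which has a k-conversion set of size k. -/

import Mathlib

open scoped Classical

noncomputable def convStep {V : Type*} [Fintype V] (G : SimpleGraph V) (k : ℕ)
    (S : Finset V) : Finset V :=
  S ∪ Finset.univ.filter fun v => k ≤ (S.filter fun u => G.Adj v u).card

def IsConversionSet {V : Type*} [Fintype V] (G : SimpleGraph V) (k : ℕ)
    (S : Finset V) : Prop :=
  ∃ t : ℕ, (convStep G k)^[t] S = Finset.univ

noncomputable def convNum {V : Type*} [Fintype V] (G : SimpleGraph V) (k : ℕ) : ℕ :=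
  sInf {n : ℕ | ∃ S : Finset V, IsConversionSet G k S ∧ S.card = n}

def IndepFinset {V : Type*} (G : SimpleGraph V) (S : Finset V) : Prop :=
  ∀ v ∈ S, ∀ w ∈ S, ¬ G.Adj v w

/-! The complete bipartite graph `K_{k+1,k+1}` works, with `k` vertices of one side as seeds.
Every vertex of the other side is adjacent to all `k` seeds, so that whole side converts in the
first round; after it, the one unconverted vertex has `k + 1` converted neighbours. -/

section Conversion

variable {V W : Type*} [Fintype V] [Fintype W] {G : SimpleGraph V} {G' : SimpleGraph W} {k : ℕ}

theorem mem_convStep {S : Finset V} {v : V} :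
    v ∈ convStep G k S ↔ v ∈ S ∨ k ≤ (S.filter fun u => G.Adj v u).card := by
  simp [convStep]

theorem subset_convStep (S : Finset V) : S ⊆ convStep G k S :=
  Finset.subset_union_left

theorem mem_convStep_of_subset {S T : Finset V} {v : V} (hTS : T ⊆ S)
    (hadj : ∀ u ∈ T, G.Adj v u) (hk : k ≤ T.card) : v ∈ convStep G k S :=
  mem_convStep.2 <| .inr <| hk.trans <| Finset.card_le_card fun u hu =>
    Finset.mem_filter.2 ⟨hTS hu, hadj u hu⟩

theorem convStep_map (e : G ≃g G') (S : Finset V) :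
    convStep G' k (S.map e.toEquiv.toEmbedding) =
      (convStep G k S).map e.toEquiv.toEmbedding := by
  ext w
  obtain ⟨v, rfl⟩ := e.surjective w
  have hfilter : ((S.map e.toEquiv.toEmbedding).filter fun u => G'.Adj (e v) u) =
      (S.filter fun u => G.Adj v u).map e.toEquiv.toEmbedding := by
    rw [Finset.filter_map]
    congr 1
    exact Finset.filter_congr fun u _ => e.map_adj_iff
  rw [mem_convStep, hfilter, Finset.card_map]
  exact (or_congr_left (Finset.mem_map' _)).trans
    (mem_convStep.symm.trans (Finset.mem_map' _).symm)

theorem IsConversionSet.map (e : G ≃g G') {S : Finset V} (h : IsConversionSet G k S) :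
    IsConversionSet G' k (S.map e.toEquiv.toEmbedding) := by
  obtain ⟨t, ht⟩ := h
  have hsemi : Function.Semiconj (Finset.map e.toEquiv.toEmbedding) (convStep G k)
      (convStep G' k) := fun S => (convStep_map e S).symm
  exact ⟨t, by rw [← hsemi.iterate_right t S, ht, Finset.map_univ_equiv]⟩

end Conversion

namespace SimpleGraph

theorem IsRegularOfDegree.map {V W : Type*} [Fintype V] [Fintype W] {G : SimpleGraph V}
    {G' : SimpleGraph W} (e : G ≃g G') {d : ℕ} (h : G.IsRegularOfDegree d) :
    G'.IsRegularOfDegree d := by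
  intro w
  obtain ⟨v, rfl⟩ := e.surjective w
  have hnbr : G'.neighborFinset (e v) = (G.neighborFinset v).map e.toEquiv.toEmbedding := by
    ext w
    obtain ⟨u, rfl⟩ := e.surjective w
    rw [mem_neighborFinset, e.map_adj_iff]
    exact (mem_neighborFinset ..).symm.trans (Finset.mem_map' _).symm
  rw [← card_neighborFinset_eq_degree, hnbr, Finset.card_map, card_neighborFinset_eq_degree,
    h.degree_eq]

variable {α β : Type*} [Fintype α] [Fintype β]

theorem isRegularOfDegree_completeBipartiteGraph {d : ℕ} (hα : Fintype.card α = d)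
    (hβ : Fintype.card β = d) : (completeBipartiteGraph α β).IsRegularOfDegree d := by
  rintro (a | b)
  · have hnbr : (completeBipartiteGraph α β).neighborFinset (.inl a) = Finset.univ.map .inr := by
      ext (_ | _) <;> simp
    rw [← card_neighborFinset_eq_degree, hnbr, Finset.card_map, Finset.card_univ, hβ]
  · have hnbr : (completeBipartiteGraph α β).neighborFinset (.inr b) = Finset.univ.map .inl := by
      ext (_ | _) <;> simp
    rw [← card_neighborFinset_eq_degree, hnbr, Finset.card_map, Finset.card_univ, hα]

theorem isConversionSet_completeBipartiteGraph {k : ℕ} (S : Finset α) (hS : k ≤ S.card)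
    (hβ : k ≤ Fintype.card β) : IsConversionSet (completeBipartiteGraph α β) k (S.map .inl) := by
  set K := completeBipartiteGraph α β
  have hright (b : β) : .inr b ∈ convStep K k (S.map .inl) :=
    mem_convStep_of_subset subset_rfl (by simp [K]) (by simpa)
  refine ⟨2, Finset.eq_univ_of_forall ?_⟩
  rintro (a | b)
  · refine mem_convStep_of_subset (T := Finset.univ.map .inr) ?_ (by simp [K]) (by simpa)
    simpa [Finset.subset_iff] using hright
  · exact subset_convStep _ (hright b)

end SimpleGraph

theorem stmt6_general (k : ℕ) :
    ∃ G : SimpleGraph (Fin (2 * k + 2)), G.IsRegularOfDegree (k + 1) ∧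
      ∃ S : Finset (Fin (2 * k + 2)), IsConversionSet G k S ∧ S.card = k := by
  let e : Fin (k + 1) ⊕ Fin (k + 1) ≃ Fin (2 * k + 2) :=
    finSumFinEquiv.trans (finCongr (by omega))
  let K := completeBipartiteGraph (Fin (k + 1)) (Fin (k + 1))
  let φ := SimpleGraph.Iso.map e K
  let S : Finset (Fin (k + 1)) := Finset.univ.map Fin.castSuccEmb
  refine ⟨K.map e.toEmbedding,
    (SimpleGraph.isRegularOfDegree_completeBipartiteGraph (by simp) (by simp)).map φ,
    (S.map .inl).map e.toEmbedding, ?_, by simp [S]⟩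
  exact (SimpleGraph.isConversionSet_completeBipartiteGraph S (by simp [S]) (by simp)).map φ

theorem stmt6 (k : ℕ) (hk : 2 ≤ k) :
    ∃ G : SimpleGraph (Fin (2 * k + 2)), G.IsRegularOfDegree (k + 1) ∧
      ∃ S : Finset (Fin (2 * k + 2)), IsConversionSet G k S ∧ S.card = k :=
  stmt6_general k
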